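/- Let δ ∈ (0,1), α ∈ (δ−1, 1−δ), and write ξ(φ) = α − δ·cos φ. Define u(α) = ∫₀^π cos φ·(1−ξ(φ)²)^{−1/2} dφ, v(α) = ∫₀^π (1−ξ(φ)²)^{−1/2} dφ, I₁(α) = ∫₀^π ξ(φ)·((1−ξ(φ))·√(1−ξ(φ)²))^{−1} dφ, I₂(α) = ∫₀^π ξ(φ)·(1−ξ(φ)²)^{−3/2} dφ, and I₃(α) = ∫₀^π √((1+ξ(φ))/(1−ξ(φ))) dφ. Then c(α) = α − δ·u(α)/v(α), c is differentiable, and c'(α) = 1 + (I₁(α)·v(α) − I₂(α)·I₃(α))/v(α)². -/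

import Mathlib

open MeasureTheory Set Filter Real

/-- `Mn n x₀ E`: sup of `|P(x₀)|` over real polynomials of degree at most `n`
bounded by 1 on `E`. -/
noncomputable def Mn (n : ℕ) (x₀ : ℝ) (E : Set ℝ) : ℝ :=
  sSup {y | ∃ P : Polynomial ℝ, P.natDegree ≤ n ∧ (∀ x ∈ E, |P.eval x| ≤ 1) ∧
    y = |P.eval x₀|}

/-- `Ln n δ x₀`: sup of `Mn n x₀ E` over closed subsets `E ⊆ [-1,1]` with
Lebesgue measure at least `2 - 2δ`. -/
noncomputable def Ln (n : ℕ) (δ : ℝ) (x₀ : ℝ) : ℝ :=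
  sSup {y | ∃ E : Set ℝ, IsClosed E ∧ E ⊆ Icc (-1 : ℝ) 1 ∧
    2 - 2 * δ ≤ (volume E).toReal ∧ y = Mn n x₀ E}

/-- The two-interval set `E(α,δ) = [-1,1] \ (α-δ, α+δ)`. -/
def Eset (α δ : ℝ) : Set ℝ := Icc (-1 : ℝ) 1 \ Ioo (α - δ) (α + δ)

/-- The critical point `c(α)` of the Green function of `ℂ̄ \ E(α,δ)` in the gap. -/
noncomputable def cpt (δ α : ℝ) : ℝ :=
  (∫ ξ in (α - δ)..(α + δ), ξ / Real.sqrt ((1 - ξ^2) * (ξ - (α - δ)) * ((α + δ) - ξ))) /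
  (∫ ξ in (α - δ)..(α + δ), 1 / Real.sqrt ((1 - ξ^2) * (ξ - (α - δ)) * ((α + δ) - ξ)))

/-- The Green function `G_{α,δ}(x)` of `ℂ̄ \ E(α,δ)` with pole at `∞`,
in the gap `(α-δ, α+δ)`. -/
noncomputable def Gtwo (δ α x : ℝ) : ℝ :=
  ∫ ξ in (α - δ)..x, (cpt δ α - ξ) / Real.sqrt ((1 - ξ^2) * (ξ - (α - δ)) * ((α + δ) - ξ))

/-- The Green function `G_δ(x)` of `ℂ̄ \ [-1+2δ, 1]` with pole at `∞`. -/
noncomputable def Gone (δ x : ℝ) : ℝ :=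
  if x ≤ -1 + 2 * δ then
    Real.log ((δ - x) / (1 - δ) + Real.sqrt (((δ - x) / (1 - δ))^2 - 1))
  else 0

/-- The upper envelope `Φ_δ(x)`; `sSup ∅ = 0` in `ℝ`. -/
noncomputable def Phi (δ x : ℝ) : ℝ :=
  max (Gone δ x)
    (sSup {y | ∃ α ∈ Ioc (δ - 1) (0 : ℝ), x ∈ Ioo (α - δ) (α + δ) ∧ y = Gtwo δ α x})

/-- `Cheb n y = ((y+√(y²−1))ⁿ + (y−√(y²−1))ⁿ)/2`, the Chebyshev polynomial of the
first kind for `y ≥ 1`. -/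
noncomputable def Cheb (n : ℕ) (y : ℝ) : ℝ :=
  ((y + Real.sqrt (y^2 - 1))^n + (y - Real.sqrt (y^2 - 1))^n) / 2

/-!
The substitution `ξ = α - δ cos φ` turns the weight `((ξ - a)(b - ξ))^(-1/2) dξ` on the gap into
`dφ` on `(0, π)`, so both integrals defining `c(α)` become integrals of continuous functions of `φ`,
and splitting `ξ = α - δ cos φ` in the numerator gives `c = α - δ u / v`. After the substitution
`α` enters only through `1 / √(1 - (α - δ cos φ)²)`, whose `α`-derivative is bounded uniformly for
`α` near a point of `(δ - 1, 1 - δ)`; so `u` and `v` can be differentiated under the integral sign.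
The quotient rule together with `I₃ = (1 + α) v - δ u` and `I₁ = (1 + α) I₂ - δ u'` gives `c'`.
-/

open scoped Topology

theorem integral_div_sqrt_gap_eq_integral_comp_cos {δ α : ℝ} (hδ : 0 < δ) (F : ℝ → ℝ) :
    ∫ ξ in (α - δ)..(α + δ), F ξ / √((ξ - (α - δ)) * ((α + δ) - ξ)) =
      ∫ φ in (0 : ℝ)..π, F (α - δ * cos φ) := by
  have hsubst := integral_Icc_deriv_smul_of_deriv_nonneg (a := 0) (b := π)
    (f := fun φ => α - δ * cos φ) (f' := fun φ => δ * sin φ)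
    (g := fun ξ => F ξ / √((ξ - (α - δ)) * ((α + δ) - ξ))) (by fun_prop)
    (fun φ _ => by simpa using ((hasDerivAt_cos φ).const_mul δ).const_sub α)
    (fun φ hφ => (mul_pos hδ (sin_pos_of_pos_of_lt_pi hφ.1 hφ.2)).le) pi_pos.le
  simp only [cos_zero, cos_pi, mul_one, mul_neg, sub_neg_eq_add] at hsubst
  rw [intervalIntegral.integral_of_le (by linarith), intervalIntegral.integral_of_le pi_pos.le,
    ← integral_Icc_eq_integral_Ioc, ← integral_Icc_eq_integral_Ioc, ← hsubst,
    integral_Icc_eq_integral_Ioo, integral_Icc_eq_integral_Ioo]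
  refine setIntegral_congr_fun measurableSet_Ioo fun φ hφ => ?_
  have hsin : 0 < δ * sin φ := mul_pos hδ (sin_pos_of_pos_of_lt_pi hφ.1 hφ.2)
  have hgap : (α - δ * cos φ - (α - δ)) * (α + δ - (α - δ * cos φ)) = (δ * sin φ) ^ 2 := by
    linear_combination (-δ ^ 2) * sin_sq_add_cos_sq φ
  rw [smul_eq_mul, hgap, sqrt_sq hsin.le, mul_div_cancel₀ _ hsin.ne']

theorem one_sub_sq_pos_of_abs_lt_one {t : ℝ} (ht : |t| < 1) : 0 < 1 - t ^ 2 :=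
  sub_pos.2 ((sq_lt_one_iff_abs_lt_one t).2 ht)

theorem hasDerivAt_one_div_sqrt_one_sub_sq {t : ℝ} (ht : |t| < 1) :
    HasDerivAt (fun t => 1 / √(1 - t ^ 2)) (t / ((1 - t ^ 2) * √(1 - t ^ 2))) t := by
  have hpos := one_sub_sq_pos_of_abs_lt_one ht
  have h := (((hasDerivAt_pow 2 t).const_sub 1).sqrt hpos.ne').inv (sqrt_pos.2 hpos).ne'
  simp only [one_div]
  refine h.congr_deriv ?_
  field_simp
  rw [sq_sqrt hpos.le]
  ring

theorem continuousOn_one_div_sqrt_one_sub_sq :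
    ContinuousOn (fun t : ℝ => 1 / √(1 - t ^ 2)) {t | |t| < 1} := fun _ ht =>
  (hasDerivAt_one_div_sqrt_one_sub_sq ht).continuousAt.continuousWithinAt

theorem continuousOn_div_one_sub_sq_mul_sqrt :
    ContinuousOn (fun t : ℝ => t / ((1 - t ^ 2) * √(1 - t ^ 2))) {t | |t| < 1} := by
  refine ContinuousOn.div (by fun_prop) (by fun_prop) fun t (ht : |t| < 1) => ?_
  have := one_sub_sq_pos_of_abs_lt_one ht
  positivity

theorem div_one_sub_mul_sqrt_one_sub_sq {t : ℝ} (ht : |t| < 1) :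
    t / ((1 - t) * √(1 - t ^ 2)) = (1 + t) * (t / ((1 - t ^ 2) * √(1 - t ^ 2))) := by
  have := one_sub_sq_pos_of_abs_lt_one ht
  obtain ⟨h₁, h₂⟩ := abs_lt.1 ht
  have : (1 : ℝ) - t ≠ 0 := by linarith
  field_simp
  ring

theorem sqrt_one_add_div_one_sub {t : ℝ} (ht : |t| < 1) :
    √((1 + t) / (1 - t)) = (1 + t) * (1 / √(1 - t ^ 2)) := by
  obtain ⟨h₁, h₂⟩ := abs_lt.1 ht
  have h : (1 + t) / (1 - t) = (1 + t) ^ 2 / (1 - t ^ 2) := by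
    field_simp [show (1 : ℝ) - t ≠ 0 by linarith, show (1 : ℝ) - t ^ 2 ≠ 0 by nlinarith]
    ring
  rw [h, sqrt_div (sq_nonneg _), sqrt_sq (by linarith), mul_one_div]

theorem integral_sub_mul_cos_mul {f : ℝ → ℝ} (hf : Continuous f) (a b p δ : ℝ) :
    ∫ φ in a..b, (p - δ * cos φ) * f φ =
      p * (∫ φ in a..b, f φ) - δ * ∫ φ in a..b, cos φ * f φ := by
  simp_rw [sub_mul, mul_assoc]
  rw [intervalIntegral.integral_sub, intervalIntegral.integral_const_mul,
    intervalIntegral.integral_const_mul] <;>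
  exact Continuous.intervalIntegrable (by fun_prop) _ _

theorem hasDerivAt_intervalIntegral_mul_comp_sub {k k' w c : ℝ → ℝ} {s : Set ℝ} {a b x₀ : ℝ}
    (hs : IsOpen s) (hk : ∀ t ∈ s, HasDerivAt k (k' t) t) (hk' : ContinuousOn k' s)
    (hw : Continuous w) (hc : Continuous c) (hx₀ : ∀ φ ∈ uIcc a b, x₀ - c φ ∈ s) :
    HasDerivAt (fun x => ∫ φ in a..b, w φ * k (x - c φ))
      (∫ φ in a..b, w φ * k' (x₀ - c φ)) x₀ := by
  -- `W * M` dominates the `x`-derivative for `x` within `ε` of `x₀`, where `M` bounds `k'` on the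
  -- closed `ε`-neighbourhood of the compact set `K` of values `x₀ - c φ`.
  set K := (fun φ => x₀ - c φ) '' uIcc a b
  have hK : IsCompact K := isCompact_uIcc.image (by fun_prop)
  obtain ⟨ε, hε, hεs⟩ := hK.exists_cthickening_subset_open hs (image_subset_iff.2 hx₀)
  obtain ⟨M, hM⟩ := hK.cthickening.exists_bound_of_continuousOn (hk'.mono hεs)
  obtain ⟨W, hW⟩ := (isCompact_uIcc (a := a) (b := b)).exists_bound_of_continuousOn hw.continuousOn
  have hnear : ∀ x ∈ Metric.ball x₀ ε, ∀ φ ∈ uIcc a b, x - c φ ∈ Metric.cthickening ε K :=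
    fun x hx φ hφ => Metric.mem_cthickening_of_dist_le _ _ _ _ (mem_image_of_mem _ hφ)
      (by rw [dist_sub_right]; exact (Metric.mem_ball.1 hx).le)
  have hkc : ContinuousOn k s := fun t ht => (hk t ht).continuousAt.continuousWithinAt
  have hcont : ∀ {g : ℝ → ℝ}, ContinuousOn g s → ∀ x ∈ Metric.ball x₀ ε,
      ContinuousOn (fun φ => w φ * g (x - c φ)) (uIcc a b) := fun hg x hx =>
    hw.continuousOn.mul (hg.comp (by fun_prop) fun φ hφ => hεs (hnear x hx φ hφ))
  have hx₀ε : x₀ ∈ Metric.ball x₀ ε := Metric.mem_ball_self hε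
  refine (intervalIntegral.hasDerivAt_integral_of_dominated_loc_of_deriv_le
    (F := fun x φ => w φ * k (x - c φ)) (F' := fun x φ => w φ * k' (x - c φ))
    (bound := fun _ => W * M)
    (Metric.ball_mem_nhds x₀ hε) ?_ ((hcont hkc x₀ hx₀ε).intervalIntegrable)
    (((hcont hk' x₀ hx₀ε).mono uIoc_subset_uIcc).aestronglyMeasurable measurableSet_uIoc)
    (ae_of_all _ fun φ hφ x hx => ?_) intervalIntegrable_const
    (ae_of_all _ fun φ hφ x hx => ?_)).2
  · exact eventually_of_mem (Metric.ball_mem_nhds x₀ hε) fun x hx =>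
      ((hcont hkc x hx).mono uIoc_subset_uIcc).aestronglyMeasurable measurableSet_uIoc
  · rw [norm_mul]
    exact mul_le_mul (hW φ (uIoc_subset_uIcc hφ)) (hM _ (hnear x hx φ (uIoc_subset_uIcc hφ)))
      (norm_nonneg _) ((norm_nonneg _).trans (hW φ (uIoc_subset_uIcc hφ)))
  · simpa using ((hk _ (hεs (hnear x hx φ (uIoc_subset_uIcc hφ)))).comp x
      ((hasDerivAt_id x).sub_const (c φ))).const_mul (w φ)

theorem hasDerivAt_intervalIntegral_div_sqrt_one_sub_sq {w c : ℝ → ℝ} {a b x₀ : ℝ}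
    (hw : Continuous w) (hc : Continuous c) (hx₀ : ∀ φ ∈ uIcc a b, |x₀ - c φ| < 1) :
    HasDerivAt (fun x => ∫ φ in a..b, w φ / √(1 - (x - c φ) ^ 2))
      (∫ φ in a..b, w φ * ((x₀ - c φ) / ((1 - (x₀ - c φ) ^ 2) * √(1 - (x₀ - c φ) ^ 2)))) x₀ := by
  have := hasDerivAt_intervalIntegral_mul_comp_sub (k := fun t => 1 / √(1 - t ^ 2))
    (isOpen_lt continuous_abs continuous_const) (fun t ht => hasDerivAt_one_div_sqrt_one_sub_sq ht)
    ?_ hw hc hx₀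
  · simpa only [mul_one_div] using this
  · exact continuousOn_div_one_sub_sq_mul_sqrt

section Gap

variable {δ α : ℝ}

theorem abs_sub_mul_cos_lt_one (hδ : 0 ≤ δ) (hα : α ∈ Ioo (δ - 1) (1 - δ)) (φ : ℝ) :
    |α - δ * cos φ| < 1 := by
  obtain ⟨h₁, h₂⟩ := hα
  rw [abs_lt]
  constructor <;> nlinarith [neg_one_le_cos φ, cos_le_one φ]

theorem continuous_one_div_sqrt_one_sub_sq_sub_mul_cos (hδ : 0 ≤ δ)
    (hα : α ∈ Ioo (δ - 1) (1 - δ)) :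
    Continuous fun φ => 1 / √(1 - (α - δ * cos φ) ^ 2) :=
  continuousOn_one_div_sqrt_one_sub_sq.comp_continuous (f := fun φ => α - δ * cos φ)
    (by fun_prop) (abs_sub_mul_cos_lt_one hδ hα)

theorem integral_one_div_sqrt_one_sub_sq_pos (hδ : 0 ≤ δ) (hα : α ∈ Ioo (δ - 1) (1 - δ)) :
    0 < ∫ φ in (0 : ℝ)..π, 1 / √(1 - (α - δ * cos φ) ^ 2) := by
  refine intervalIntegral.intervalIntegral_pos_of_pos
    ((continuous_one_div_sqrt_one_sub_sq_sub_mul_cos hδ hα).intervalIntegrable _ _)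
    (fun φ => ?_) pi_pos
  have := one_sub_sq_pos_of_abs_lt_one (abs_sub_mul_cos_lt_one hδ hα φ)
  positivity

theorem cpt_eq_sub_mul_div (hδ : 0 < δ) (hα : α ∈ Ioo (δ - 1) (1 - δ)) :
    cpt δ α = α - δ * (∫ φ in (0 : ℝ)..π, cos φ / √(1 - (α - δ * cos φ) ^ 2)) /
      (∫ φ in (0 : ℝ)..π, 1 / √(1 - (α - δ * cos φ) ^ 2)) := by
  have hsubst (g : ℝ → ℝ) :
      ∫ ξ in (α - δ)..(α + δ), g ξ / √((1 - ξ ^ 2) * (ξ - (α - δ)) * ((α + δ) - ξ)) =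
        ∫ φ in (0 : ℝ)..π, g (α - δ * cos φ) / √(1 - (α - δ * cos φ) ^ 2) := by
    rw [← integral_div_sqrt_gap_eq_integral_comp_cos hδ (fun ξ => g ξ / √(1 - ξ ^ 2))]
    refine intervalIntegral.integral_congr fun ξ hξ => ?_
    rw [uIcc_of_le (by linarith)] at hξ
    rw [mul_assoc, sqrt_mul' _ (mul_nonneg (sub_nonneg.2 hξ.1) (sub_nonneg.2 hξ.2)), div_div]
  have hnum := integral_sub_mul_cos_mul (continuous_one_div_sqrt_one_sub_sq_sub_mul_cos hδ.le hα)
    0 π α δ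
  simp only [mul_one_div] at hnum
  have hV := (integral_one_div_sqrt_one_sub_sq_pos hδ.le hα).ne'
  rw [cpt, hsubst, hsubst, hnum]
  field_simp

theorem integral_div_one_sub_mul_sqrt_eq (hδ : 0 ≤ δ) (hα : α ∈ Ioo (δ - 1) (1 - δ)) :
    ∫ φ in (0 : ℝ)..π, (α - δ * cos φ) / ((1 - (α - δ * cos φ)) * √(1 - (α - δ * cos φ) ^ 2)) =
      (1 + α) * (∫ φ in (0 : ℝ)..π,
          (α - δ * cos φ) / ((1 - (α - δ * cos φ) ^ 2) * √(1 - (α - δ * cos φ) ^ 2))) -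
        δ * ∫ φ in (0 : ℝ)..π,
          cos φ * ((α - δ * cos φ) / ((1 - (α - δ * cos φ) ^ 2) * √(1 - (α - δ * cos φ) ^ 2))) := by
  have hf : Continuous fun φ =>
      (α - δ * cos φ) / ((1 - (α - δ * cos φ) ^ 2) * √(1 - (α - δ * cos φ) ^ 2)) :=
    continuousOn_div_one_sub_sq_mul_sqrt.comp_continuous (f := fun φ => α - δ * cos φ)
      (by fun_prop) (abs_sub_mul_cos_lt_one hδ hα)
  rw [← integral_sub_mul_cos_mul hf]
  refine intervalIntegral.integral_congr fun φ _ => ?_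
  simp only [div_one_sub_mul_sqrt_one_sub_sq (abs_sub_mul_cos_lt_one hδ hα φ)]
  ring

theorem integral_sqrt_one_add_div_one_sub_eq (hδ : 0 ≤ δ) (hα : α ∈ Ioo (δ - 1) (1 - δ)) :
    ∫ φ in (0 : ℝ)..π, √((1 + (α - δ * cos φ)) / (1 - (α - δ * cos φ))) =
      (1 + α) * (∫ φ in (0 : ℝ)..π, 1 / √(1 - (α - δ * cos φ) ^ 2)) -
        δ * ∫ φ in (0 : ℝ)..π, cos φ / √(1 - (α - δ * cos φ) ^ 2) := by
  have h := integral_sub_mul_cos_mul (continuous_one_div_sqrt_one_sub_sq_sub_mul_cos hδ hα)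
    0 π (1 + α) δ
  simp only [mul_one_div] at h
  rw [← h]
  refine intervalIntegral.integral_congr fun φ _ => ?_
  simp only [sqrt_one_add_div_one_sub (abs_sub_mul_cos_lt_one hδ hα φ)]
  ring

end Gap

/-- trigonometric representation of `c(α)` and the formula
`c'(α) = 1 + (I₁ v − I₂ I₃)/v²`. -/
theorem cpt_trig_representation_and_derivative (δ α : ℝ) (hδ : δ ∈ Ioo (0 : ℝ) 1)
    (hα : α ∈ Ioo (δ - 1) (1 - δ)) :
    cpt δ α = α - δ *
        (∫ φ in (0 : ℝ)..Real.pi, Real.cos φ / Real.sqrt (1 - (α - δ * Real.cos φ)^2)) /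
        (∫ φ in (0 : ℝ)..Real.pi, 1 / Real.sqrt (1 - (α - δ * Real.cos φ)^2)) ∧
    DifferentiableAt ℝ (cpt δ) α ∧
    deriv (cpt δ) α = 1 +
      ((∫ φ in (0 : ℝ)..Real.pi, (α - δ * Real.cos φ) /
            ((1 - (α - δ * Real.cos φ)) * Real.sqrt (1 - (α - δ * Real.cos φ)^2))) *
          (∫ φ in (0 : ℝ)..Real.pi, 1 / Real.sqrt (1 - (α - δ * Real.cos φ)^2)) -
        (∫ φ in (0 : ℝ)..Real.pi, (α - δ * Real.cos φ) /
            ((1 - (α - δ * Real.cos φ)^2) * Real.sqrt (1 - (α - δ * Real.cos φ)^2))) *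
          (∫ φ in (0 : ℝ)..Real.pi,
            Real.sqrt ((1 + (α - δ * Real.cos φ)) / (1 - (α - δ * Real.cos φ))))) /
      (∫ φ in (0 : ℝ)..Real.pi, 1 / Real.sqrt (1 - (α - δ * Real.cos φ)^2))^2 := by
  obtain ⟨hδ, -⟩ := hδ
  have hξ : ∀ φ ∈ uIcc 0 π, |α - δ * cos φ| < 1 := fun φ _ => abs_sub_mul_cos_lt_one hδ.le hα φ
  have hu := hasDerivAt_intervalIntegral_div_sqrt_one_sub_sq continuous_cos (by fun_prop) hξ
  have hv := hasDerivAt_intervalIntegral_div_sqrt_one_sub_sq (w := fun _ => 1) continuous_const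
    (by fun_prop) hξ
  simp only [one_mul] at hv
  have hrep : (fun x => x - δ * (∫ φ in (0 : ℝ)..π, cos φ / √(1 - (x - δ * cos φ) ^ 2)) /
      (∫ φ in (0 : ℝ)..π, 1 / √(1 - (x - δ * cos φ) ^ 2))) =ᶠ[𝓝 α] cpt δ :=
    eventually_of_mem (isOpen_Ioo.mem_nhds hα) fun x hx => (cpt_eq_sub_mul_div hδ hx).symm
  have hc := ((hasDerivAt_id α).sub ((hu.const_mul δ).div hv
    (integral_one_div_sqrt_one_sub_sq_pos hδ.le hα).ne')).congr_of_eventuallyEq hrep.symm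
  refine ⟨cpt_eq_sub_mul_div hδ hα, hc.differentiableAt, ?_⟩
  rw [hc.deriv, integral_div_one_sub_mul_sqrt_eq hδ.le hα,
    integral_sqrt_one_add_div_one_sub_eq hδ.le hα]
  field_simp
  ring
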